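/- Let K be a field, 𝒢 an ultragraph without sinks, and p, q irrational infinite paths in 𝒢. Let V_{[p]} be the K-vector space with basis [p] = {q ∈ 𝔭^∞ : q ∼ p}, made into a left L_K(𝒢)-module by the K-linear extension of: p_A·q = q if s(q) ∈ A and 0 otherwise; s_e·q = eq if s(q) ∈ r(e) and 0 otherwise; s*_e·q = τ_{>1}(q) if the first edge of q equals e, and 0 otherwise. Then: (1) V_{[p]} is a simple left L_K(𝒢)-module; (2) V_{[p]} ≅ V_{[q]} as left L_K(𝒢)-modules if and only if [p] = [q], which happens precisely when V_{[p]} = V_{[q]}; (3) End_{L_K(𝒢)}(V_{[p]}) ≅ K. -/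

import Mathlib

set_option synthInstance.maxHeartbeats 1000000
set_option maxHeartbeats 1000000

noncomputable section
open Classical TensorProduct

/-- An ultragraph: countable sets of vertices and edges (countability is imposed in the
theorems), a source map and a range map taking nonempty sets of vertices. -/
structure Ultragraph (V E : Type) where
  s : E → V
  r : E → Set V
  r_nonempty : ∀ e, (r e).Nonempty

namespace Ultragraph

variable {V E : Type}

/-- Membership in `𝒢⁰`: the smallest collection of subsets of `G⁰` containing the
singletons and the ranges of edges, closed under finite unions and intersections. -/
inductive IsG0 (U : Ultragraph V E) : Set V → Prop
  | vertex (v : V) : IsG0 U {v}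
  | range (e : E) : IsG0 U (U.r e)
  | union {A B : Set V} : IsG0 U A → IsG0 U B → IsG0 U (A ∪ B)
  | inter {A B : Set V} : IsG0 U A → IsG0 U B → IsG0 U (A ∩ B)

variable (U : Ultragraph V E)

/-- No sinks: every vertex emits at least one edge. -/
def HasNoSinks : Prop := ∀ v : V, ∃ e : E, U.s e = v

/-- No vertex is an infinite emitter. -/
def NoInfiniteEmitters : Prop := ∀ v : V, {e : E | U.s e = v}.Finite

/-- A regular vertex: `0 < |s⁻¹(v)| < ∞`. -/
def IsRegular (v : V) : Prop := {e : E | U.s e = v}.Nonempty ∧ {e : E | U.s e = v}.Finite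

/-- Two edges are composable when the source of the second lies in the range of the first. -/
def Adj (e f : E) : Prop := U.s f ∈ U.r e

/-- A (possibly empty) compatible list of edges. -/
def IsEdgePath (l : List E) : Prop := List.Chain' U.Adj l

/-- Range of a list of edges: the range of its last edge (junk value `∅` on `[]`). -/
def rList (l : List E) : Set V :=
  match l.getLast? with
  | some e => U.r e
  | none => ∅

/-- A finite path in `𝒢*`: either an element of `𝒢⁰` (length `0`) or a nonempty
compatible list of edges. -/
def IsFPath : Set V ⊕ List E → Prop
  | Sum.inl A => U.IsG0 A
  | Sum.inr l => l ≠ [] ∧ U.IsEdgePath l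

/-- Range of a finite path. -/
def rF : Set V ⊕ List E → Set V
  | Sum.inl A => A
  | Sum.inr l => U.rList l

/-- "The source of the finite path `α` is the vertex `v`". -/
def sFMatch : Set V ⊕ List E → V → Prop
  | Sum.inl A, v => A = ({v} : Set V)
  | Sum.inr l, v => ∃ e, l.head? = some e ∧ U.s e = v

/-- A cycle: a nonempty path whose source vertex belongs to its range. -/
def IsCycle (c : List E) : Prop :=
  c ≠ [] ∧ U.IsEdgePath c ∧ ∃ e, c.head? = some e ∧ U.s e ∈ U.rList c

/-- A first-return path based at `v`. -/
def IsFirstReturn (v : V) (c : List E) : Prop :=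
  c ≠ [] ∧ U.IsEdgePath c ∧ (∃ e, c.head? = some e ∧ U.s e = v) ∧ v ∈ U.rList c ∧
    ∀ (i : ℕ) (h : i < c.length), 0 < i → U.s (c.get ⟨i, h⟩) ≠ v

/-- Condition (K). -/
def ConditionK : Prop :=
  ∀ v : V, (∀ c : List E, ¬ U.IsFirstReturn v c) ∨
    ∃ c₁ c₂ : List E, U.IsFirstReturn v c₁ ∧ U.IsFirstReturn v c₂ ∧ c₁ ≠ c₂

/-- `w ≥ v`: there is a finite path with source `w` whose range contains `v`. -/
def VGe (w v : V) : Prop := ∃ α : Set V ⊕ List E, U.IsFPath α ∧ U.sFMatch α w ∧ v ∈ U.rF α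

/-- An ultrapath, given as raw data `(α, A)` (a list of edges and a range set):
the list is compatible, `A ∈ 𝒢⁰` and `A ⊆ r(α)` when `α` is nonempty.
Length-zero ultrapaths `( [], A )` are the elements `A ∈ 𝒢⁰`. -/
def IsUPath (x : List E × Set V) : Prop :=
  U.IsEdgePath x.1 ∧ U.IsG0 x.2 ∧ ∀ e, x.1.getLast? = some e → x.2 ⊆ U.r e

/-- The "source" of an ultrapath, as a set: the singleton on the source of its first edge,
or the set itself in length zero. -/
def srcSet (x : List E × Set V) : Set V :=
  match x.1.head? with
  | some e => {U.s e}
  | none => x.2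

/-- The concatenation `x · y` is defined. -/
def CanConcatU (x y : List E × Set V) : Prop := (x.2 ∩ U.srcSet y).Nonempty

/-- An infinite path. -/
def IsIPath (p : ℕ → E) : Prop := ∀ n : ℕ, U.s (p (n + 1)) ∈ U.r (p n)

/-- The principal filter of `A` in the meet-semilattice `𝒢⁰`. -/
def principalFilter (A : Set V) : Set (Set V) := {B | U.IsG0 B ∧ A ⊆ B}

/-- A filter in `𝒢⁰`. -/
def IsFilterG0 (F : Set (Set V)) : Prop :=
  (∀ B ∈ F, U.IsG0 B) ∧ (∅ : Set V) ∉ F ∧ (∀ A ∈ F, ∀ B ∈ F, A ∩ B ∈ F) ∧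
    ∀ A ∈ F, ∀ B : Set V, U.IsG0 B → A ⊆ B → B ∈ F

/-- An ultraset: an element of `𝒢⁰` whose principal filter is an ultrafilter in `𝒢⁰`. -/
def IsUltraset (A : Set V) : Prop :=
  U.IsG0 A ∧ U.IsFilterG0 (U.principalFilter A) ∧
    ∀ F : Set (Set V), U.IsFilterG0 F → U.principalFilter A ⊆ F → F = U.principalFilter A

/-- `A` is an infinite emitter (as a set). -/
def InfEmitterSet (A : Set V) : Prop := {e : E | U.s e ∈ A}.Infinite

end Ultragraph

/-- Concatenation of ultrapaths (raw operation). -/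
def concatU {V E : Type} (x y : List E × Set V) : List E × Set V :=
  (x.1 ++ y.1, if y.1 = [] then x.2 ∩ y.2 else y.2)

/-- Prepend a finite list of edges to an infinite path. -/
def prependL {E : Type} (l : List E) (p : ℕ → E) : ℕ → E :=
  fun n => if h : n < l.length then l.get ⟨n, h⟩ else p (n - l.length)

/-- The periodic infinite path `ccc⋯` determined by a nonempty list `c`. -/
def periodicL {E : Type} (c : List E) (hc : c ≠ []) : ℕ → E :=
  fun n => c.get ⟨n % c.length, Nat.mod_lt n (List.length_pos_iff.mpr hc)⟩

/-- Shift of an infinite path: `τ_{>m}`. -/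
def shiftL {E : Type} (m : ℕ) (p : ℕ → E) : ℕ → E := fun n => p (n + m)

/-- Tail-equivalence of infinite paths. -/
def IPEquiv {E : Type} (p q : ℕ → E) : Prop := ∃ m n : ℕ, shiftL m p = shiftL n q

namespace Ultragraph

variable {V E : Type} (U : Ultragraph V E)

/-- Elements of `X_𝒢 = Y_∞ ∪ 𝔭^∞` (raw data): a finite ultrapath or an infinite path. -/
abbrev XType (V E : Type) : Type := (List E × Set V) ⊕ (ℕ → E)

/-- Concatenation of an ultrapath with an element of `X_𝒢` (raw operation). -/
def concatXel (x : List E × Set V) : XType V E → XType V E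
  | Sum.inl y => Sum.inl (concatU x y)
  | Sum.inr p => Sum.inr (prependL x.1 p)

/-- Membership in `X_𝒢`. -/
def IsXEl : XType V E → Prop
  | Sum.inl y => U.IsUPath y ∧ U.IsUltraset y.2 ∧ U.InfEmitterSet y.2
  | Sum.inr p => U.IsIPath p

/-- The concatenation `x · μ` is defined. -/
def CanConcatX (x : List E × Set V) : XType V E → Prop
  | Sum.inl y => U.CanConcatU x y
  | Sum.inr p => U.s (p 0) ∈ x.2

/-- Raw triples, of which the ultragraph groupoid consists. -/
abbrev Trip (V E : Type) : Type := XType V E × ℤ × XType V E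

/-- Membership in the ultragraph groupoid
`𝔊_𝒢 = {(x·μ, |x|−|y|, y·μ) : x, y ∈ 𝔭, μ ∈ X_𝒢, r(x) = r(y), x·μ, y·μ ∈ X_𝒢}`. -/
def InGrpd (g : Trip V E) : Prop :=
  ∃ (x y : List E × Set V) (μ : XType V E),
    U.IsUPath x ∧ U.IsUPath y ∧ U.IsXEl μ ∧ x.2 = y.2 ∧
    U.CanConcatX x μ ∧ U.CanConcatX y μ ∧
    U.IsXEl (concatXel x μ) ∧ U.IsXEl (concatXel y μ) ∧
    g = (concatXel x μ, (x.1.length : ℤ) - (y.1.length : ℤ), concatXel y μ)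

end Ultragraph

/-- Composition in the ultragraph groupoid: `(u,k,v)(v,l,w) = (u,k+l,w)` (raw operation). -/
def compT {V E : Type} (a b : Ultragraph.Trip V E) : Ultragraph.Trip V E :=
  (a.1, a.2.1 + b.2.1, b.2.2)

namespace Ultragraph

variable {V E : Type} (U : Ultragraph V E)

/-- The degree-`n` component `(𝔊_𝒢)_n` of the ℤ-graded ultragraph groupoid. -/
def gradeSet (n : ℤ) : Set (Trip V E) := {g | U.InGrpd g ∧ g.2.1 = n}

/-- Product of two subsets of the groupoid: `ST = {ab : a ∈ S, b ∈ T composable}`. -/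
def setMulG (S T : Set (Trip V E)) : Set (Trip V E) :=
  {c | ∃ a ∈ S, ∃ b ∈ T, a.2.2 = b.1 ∧ c = compT a b}

/-- The carrier of the ultragraph groupoid `𝔊_𝒢`. -/
def Grpd : Type := {g : Trip V E // U.InGrpd g}

/-- The set `𝒜(x,y)`. -/
def ASetRaw (x y : List E × Set V) : Set (Trip V E) :=
  {g | ∃ μ : XType V E, U.IsXEl μ ∧ U.CanConcatX x μ ∧ U.CanConcatX y μ ∧
      U.IsXEl (concatXel x μ) ∧ U.IsXEl (concatXel y μ) ∧
      g = (concatXel x μ, (x.1.length : ℤ) - (y.1.length : ℤ), concatXel y μ)}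

/-- The set `𝒜(x,y)` inside the groupoid. -/
def ASet (x y : List E × Set V) : Set U.Grpd := {g | g.1 ∈ U.ASetRaw x y}

/-- The basic set `𝒜(x,y,K,Q)`. -/
def ABasic (x y : List E × Set V) (Ke : Set E) (Q : Set (Set V)) : Set U.Grpd :=
  U.ASet x y \
    ((⋃ e ∈ Ke, U.ASet (concatU x ([e], U.r e)) (concatU y ([e], U.r e))) ∪
      ⋃ C ∈ Q, U.ASet (concatU x (([] : List E), C)) (concatU y (([] : List E), C)))

/-- The collection of all basic open sets `𝒜(x,y,K,Q)`. -/
def BasicSets : Set (Set U.Grpd) :=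
  {S | ∃ (x y : List E × Set V) (Ke : Set E) (Q : Set (Set V)),
      U.IsUPath x ∧ U.IsUPath y ∧ x.2 = y.2 ∧
      (∀ e ∈ Ke, U.s e ∈ x.2) ∧ Ke.Finite ∧ (∀ C ∈ Q, U.IsG0 C) ∧ Q.Finite ∧
      S = U.ABasic x y Ke Q}

/-- The topology of the ultragraph groupoid, generated by the sets `𝒜(x,y,K,Q)`. -/
instance : TopologicalSpace U.Grpd := TopologicalSpace.generateFrom U.BasicSets

/-- The unit space `𝔊_𝒢⁽⁰⁾ = {(μ,0,μ) : μ ∈ X_𝒢}` inside the groupoid. -/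
def unitSpaceSet : Set U.Grpd := {g | g.1.2.1 = 0 ∧ g.1.1 = g.1.2.2}

end Ultragraph

/-- The source unit `s(u,k,v) = (v,0,v)` of a raw triple. -/
def srcT {V E : Type} (g : Ultragraph.Trip V E) : Ultragraph.Trip V E := (g.2.2, 0, g.2.2)

/-- The range unit `r(u,k,v) = (u,0,u)` of a raw triple. -/
def rngT {V E : Type} (g : Ultragraph.Trip V E) : Ultragraph.Trip V E := (g.1, 0, g.1)

namespace Ultragraph

variable {V E : Type} (U : Ultragraph V E)

/-- A subset `D` of the unit space is invariant if `s(γ) ∈ D` implies `r(γ) ∈ D`. -/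
def InvariantSet (D : Set U.Grpd) : Prop :=
  ∀ g : U.Grpd, ∀ (h1 : U.InGrpd (srcT g.1)) (h2 : U.InGrpd (rngT g.1)),
    (⟨srcT g.1, h1⟩ : U.Grpd) ∈ D → (⟨rngT g.1, h2⟩ : U.Grpd) ∈ D

/-- The source of `g` lies in `D`. -/
def SrcInD (D : Set U.Grpd) (g : U.Grpd) : Prop :=
  ∃ h : U.InGrpd (srcT g.1), (⟨srcT g.1, h⟩ : U.Grpd) ∈ D

/-- The range of `g` lies in `D`. -/
def RngInD (D : Set U.Grpd) (g : U.Grpd) : Prop :=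
  ∃ h : U.InGrpd (rngT g.1), (⟨rngT g.1, h⟩ : U.Grpd) ∈ D

/-- The restriction `𝔊_𝒢|_D` of the groupoid to a subset `D` of the unit space. -/
def RestrSet (D : Set U.Grpd) : Set U.Grpd := {g | U.SrcInD D g ∧ U.RngInD D g}

/-- The ultragraph groupoid is minimal: the unit space has no nontrivial open
invariant subsets. -/
def IsMinimalGrpd : Prop :=
  ∀ D : Set U.Grpd, D ⊆ U.unitSpaceSet →
    IsOpen {u : U.unitSpaceSet | (u : U.Grpd) ∈ D} → U.InvariantSet D →
      D = ∅ ∨ D = U.unitSpaceSet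

end Ultragraph


namespace Ultragraph

variable {V E : Type}

/-- Generators of the ultragraph Leavitt path algebra: `p_A` (`A ∈ 𝒢⁰`), `s_e`, `s*_e`. -/
inductive LGen (U : Ultragraph V E) : Type
  | pr : {A : Set V // U.IsG0 A} → LGen U
  | ed : E → LGen U
  | st : E → LGen U

variable (K : Type) [Field K] (U : Ultragraph V E)

/-- The defining relations of the ultragraph Leavitt path algebra. -/
inductive LRel : FreeAlgebra K (LGen U) → FreeAlgebra K (LGen U) → Prop
  | pEmpty (h : U.IsG0 (∅ : Set V)) :
      LRel (FreeAlgebra.ι K (LGen.pr ⟨∅, h⟩)) 0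
  | pInter (A B : {A : Set V // U.IsG0 A}) :
      LRel (FreeAlgebra.ι K (LGen.pr A) * FreeAlgebra.ι K (LGen.pr B))
        (FreeAlgebra.ι K (LGen.pr ⟨A.1 ∩ B.1, IsG0.inter A.2 B.2⟩))
  | pUnion (A B : {A : Set V // U.IsG0 A}) :
      LRel (FreeAlgebra.ι K (LGen.pr ⟨A.1 ∪ B.1, IsG0.union A.2 B.2⟩))
        (FreeAlgebra.ι K (LGen.pr A) + FreeAlgebra.ι K (LGen.pr B) -
          FreeAlgebra.ι K (LGen.pr ⟨A.1 ∩ B.1, IsG0.inter A.2 B.2⟩))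
  | sLeft (e : E) :
      LRel (FreeAlgebra.ι K (LGen.pr ⟨{U.s e}, IsG0.vertex (U.s e)⟩) * FreeAlgebra.ι K (LGen.ed e))
        (FreeAlgebra.ι K (LGen.ed e))
  | sRight (e : E) :
      LRel (FreeAlgebra.ι K (LGen.ed e) * FreeAlgebra.ι K (LGen.pr ⟨U.r e, IsG0.range e⟩))
        (FreeAlgebra.ι K (LGen.ed e))
  | stLeft (e : E) :
      LRel (FreeAlgebra.ι K (LGen.pr ⟨U.r e, IsG0.range e⟩) * FreeAlgebra.ι K (LGen.st e))
        (FreeAlgebra.ι K (LGen.st e))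
  | stRight (e : E) :
      LRel (FreeAlgebra.ι K (LGen.st e) * FreeAlgebra.ι K (LGen.pr ⟨{U.s e}, IsG0.vertex (U.s e)⟩))
        (FreeAlgebra.ι K (LGen.st e))
  | ortho (e f : E) (h : e ≠ f) :
      LRel (FreeAlgebra.ι K (LGen.st e) * FreeAlgebra.ι K (LGen.ed f)) 0
  | ck1 (e : E) :
      LRel (FreeAlgebra.ι K (LGen.st e) * FreeAlgebra.ι K (LGen.ed e))
        (FreeAlgebra.ι K (LGen.pr ⟨U.r e, IsG0.range e⟩))
  | ck2 (v : V) (h : U.IsRegular v) :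
      LRel (FreeAlgebra.ι K (LGen.pr ⟨{v}, IsG0.vertex v⟩))
        (h.2.toFinset.sum fun e => FreeAlgebra.ι K (LGen.ed e) * FreeAlgebra.ι K (LGen.st e))

/-- The ultragraph Leavitt path algebra `L_K(𝒢)`, presented by generators and relations.
(For a non-unital `L_K(𝒢)` this is its unitalization; the algebra itself is the
subspace `Lsub` spanned by the monomials `s_α p_A s*_β`.) -/
abbrev LPA : Type := RingQuot (LRel K U)

/-- The generator `p_A`. -/
def pGen (A : Set V) (h : U.IsG0 A) : LPA K U :=
  RingQuot.mkAlgHom K (LRel K U) (FreeAlgebra.ι K (LGen.pr ⟨A, h⟩))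

/-- The generator `s_e`. -/
def sGen (e : E) : LPA K U :=
  RingQuot.mkAlgHom K (LRel K U) (FreeAlgebra.ι K (LGen.ed e))

/-- The generator `s*_e`. -/
def stGen (e : E) : LPA K U :=
  RingQuot.mkAlgHom K (LRel K U) (FreeAlgebra.ι K (LGen.st e))

/-- `s_α` for a list of edges `α`. -/
def sPath (l : List E) : LPA K U := (l.map (sGen K U)).prod

/-- `s*_α` for a list of edges `α`. -/
def stPath (l : List E) : LPA K U := (l.reverse.map (stGen K U)).prod

/-- The degree-`n` homogeneous component
`L_K(𝒢)_n = span_K { s_α p_A s*_β : |α| − |β| = n }`. -/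
def homComp (n : ℤ) : Submodule K (LPA K U) :=
  Submodule.span K {x : LPA K U | ∃ (α β : List E) (A : Set V) (hA : U.IsG0 A),
    (α.length : ℤ) - (β.length : ℤ) = n ∧
    x = sPath K U α * pGen K U A hA * stPath K U β}

/-- The Leavitt path algebra `L_K(𝒢)` itself: the span of all monomials `s_α p_A s*_β`
inside the (possibly unitalized) presented algebra. -/
def Lsub : Submodule K (LPA K U) :=
  Submodule.span K {x : LPA K U | ∃ (α β : List E) (A : Set V) (hA : U.IsG0 A),
    x = sPath K U α * pGen K U A hA * stPath K U β}

/-- `s_α` for a finite path `α ∈ 𝒢*` (with `s_A = p_A` in length zero). -/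
def sFMono : (α : Set V ⊕ List E) → U.IsFPath α → LPA K U
  | Sum.inl A, h => pGen K U A h
  | Sum.inr l, _ => sPath K U l

/-- `s*_α` for a finite path `α ∈ 𝒢*` (with `s*_A = p_A` in length zero). -/
def stFMono : (α : Set V ⊕ List E) → U.IsFPath α → LPA K U
  | Sum.inl A, h => pGen K U A h
  | Sum.inr l, _ => stPath K U l

/-- A (two-sided) ideal of `L_K(𝒢)` (sitting inside the presented algebra). -/
def IsTwoSidedIdealOfL (I : Set (LPA K U)) : Prop :=
  I ⊆ (Lsub K U : Set (LPA K U)) ∧ (0 : LPA K U) ∈ I ∧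
    (∀ a ∈ I, ∀ b ∈ I, a + b ∈ I) ∧ (∀ a ∈ I, -a ∈ I) ∧
    (∀ k : K, ∀ a ∈ I, k • a ∈ I) ∧
    ∀ a ∈ I, ∀ x ∈ (Lsub K U : Set (LPA K U)), a * x ∈ I ∧ x * a ∈ I

/-- A right ideal of `L_K(𝒢)`. -/
def IsRightIdealOfL (I : Set (LPA K U)) : Prop :=
  I ⊆ (Lsub K U : Set (LPA K U)) ∧ (0 : LPA K U) ∈ I ∧
    (∀ a ∈ I, ∀ b ∈ I, a + b ∈ I) ∧ (∀ a ∈ I, -a ∈ I) ∧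
    (∀ k : K, ∀ a ∈ I, k • a ∈ I) ∧
    ∀ a ∈ I, ∀ x ∈ (Lsub K U : Set (LPA K U)), a * x ∈ I

/-- A left ideal of `L_K(𝒢)`. -/
def IsLeftIdealOfL (I : Set (LPA K U)) : Prop :=
  I ⊆ (Lsub K U : Set (LPA K U)) ∧ (0 : LPA K U) ∈ I ∧
    (∀ a ∈ I, ∀ b ∈ I, a + b ∈ I) ∧ (∀ a ∈ I, -a ∈ I) ∧
    (∀ k : K, ∀ a ∈ I, k • a ∈ I) ∧
    ∀ a ∈ I, ∀ x ∈ (Lsub K U : Set (LPA K U)), x * a ∈ I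

/-- A subset of `L_K(𝒢)` is graded if each of its elements is a sum of homogeneous
elements lying in it. -/
def IsGradedSet (I : Set (LPA K U)) : Prop :=
  I ⊆ (AddSubgroup.closure {a : LPA K U | a ∈ I ∧ ∃ n : ℤ, a ∈ homComp K U n} :
    Set (LPA K U))

/-- The right ideal of `L_K(𝒢)` generated by a set. -/
def rIdealGen (S : Set (LPA K U)) : Set (LPA K U) :=
  ⋂₀ {I : Set (LPA K U) | IsRightIdealOfL K U I ∧ S ⊆ I}

/-- The left ideal of `L_K(𝒢)` generated by a set. -/
def lIdealGen (S : Set (LPA K U)) : Set (LPA K U) :=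
  ⋂₀ {I : Set (LPA K U) | IsLeftIdealOfL K U I ∧ S ⊆ I}

/-- Powers of an ideal: `J, J², J³, …` (as sets, `idealPow J n = J^{n+1}`). -/
def idealPow (J : Set (LPA K U)) : ℕ → Set (LPA K U)
  | 0 => J
  | n + 1 => (AddSubgroup.closure
      {z : LPA K U | ∃ a ∈ J, ∃ b ∈ idealPow J n, z = a * b} : Set (LPA K U))

end Ultragraph

namespace Ultragraph

variable {V E : Type} (U : Ultragraph V E)

/-- Condition (2) of the strong-grading criterion: for every `k ∈ ℕ` and every infinite
path `p`, there are an initial subpath `x` of `p` and a finite path `y ∈ 𝒢*` with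
`r(x) = r(y)` and `|y| − |x| = k`. -/
def GradedCond2 : Prop :=
  ∀ (k : ℕ) (p : ℕ → E), U.IsIPath p →
    ∃ n : ℕ, 0 < n ∧ ∃ y : List E, y ≠ [] ∧ U.IsEdgePath y ∧
      U.rList y = U.r (p (n - 1)) ∧ (y.length : ℤ) - (n : ℤ) = (k : ℤ)

variable (K : Type) [Field K]

/-- The projection onto the degree-`n` homogeneous component (obtained by choice from the
internal decomposition of the grading; `0` if no such family of projections exists). -/
noncomputable def gradedProj (n : ℤ) : LPA K U →ₗ[K] LPA K U :=
  if h : ∃ P : ℤ → (LPA K U →ₗ[K] LPA K U),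
      (∀ (m : ℤ) (x : LPA K U), P m x ∈ homComp K U m) ∧
      (∀ m : ℤ, ∀ x ∈ homComp K U m, P m x = x) ∧
      (∀ m k' : ℤ, m ≠ k' → ∀ x ∈ homComp K U k', P m x = 0)
  then h.choose n else 0

/-- Multiplication of the smash product `L_K(𝒢) # ℤ`:
`(a p_m)(b p_n) = a·b_{m−n} p_n`, where elements of `L_K(𝒢) # ℤ` are finitely
supported functions `ℤ →₀ L_K(𝒢)`. -/
noncomputable def smashMul (x y : ℤ →₀ LPA K U) : ℤ →₀ LPA K U :=
  x.sum fun m a => y.sum fun n b => Finsupp.single n (a * gradedProj U K (m - n) b)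

end Ultragraph

/-- The skew product ultragraph `𝒢 ×₁ ℤ`. -/
def Ultragraph.skewZ {V E : Type} (U : Ultragraph V E) : Ultragraph (V × ℤ) (E × ℤ) where
  s := fun en => (U.s en.1, en.2)
  r := fun en => (fun w => (w, en.2 - 1)) '' U.r en.1
  r_nonempty := fun en => (U.r_nonempty en.1).image _

namespace Ultragraph

variable {V E : Type} (U : Ultragraph V E) (K : Type) [Field K]

/-- Composability of two groupoid elements. -/
def Composable (a b : U.Grpd) : Prop := a.1.2.2 = b.1.1

/-- Convolution product of functions on the groupoid:
`(f * g)(γ) = Σ_{γ = αβ} f(α) g(β)`. -/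
noncomputable def convK (f g : U.Grpd → K) : U.Grpd → K :=
  fun γ => ∑ᶠ q : {q : U.Grpd × U.Grpd // U.Composable q.1 q.2 ∧ compT q.1.1 q.2.1 = γ.1},
    f q.1.1 * g q.1.2

/-- A compact open bisection of the ultragraph groupoid. -/
def IsCOB (W : Set U.Grpd) : Prop :=
  IsCompact W ∧ IsOpen W ∧
    (∀ a ∈ W, ∀ b ∈ W, a.1.2.2 = b.1.2.2 → a = b) ∧
    ∀ a ∈ W, ∀ b ∈ W, a.1.1 = b.1.1 → a = b

/-- The Steinberg algebra `A_K(𝔊_𝒢)` (as a subspace of `K^{𝔊_𝒢}`): the `K`-span of the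
characteristic functions of compact open bisections. -/
def SteinbergSpan : Submodule K (U.Grpd → K) :=
  Submodule.span K {f : U.Grpd → K |
    ∃ W : Set U.Grpd, U.IsCOB W ∧ f = Set.indicator W fun _ => (1 : K)}

/-- The span of characteristic functions of `n`-homogeneous compact open bisections:
the degree-`n` component `A_K(𝔊_𝒢)_n`. -/
def SteinbergComp (n : ℤ) : Submodule K (U.Grpd → K) :=
  Submodule.span K {f : U.Grpd → K |
    ∃ W : Set U.Grpd, U.IsCOB W ∧ W ⊆ {g : U.Grpd | g.1.2.1 = n} ∧
      f = Set.indicator W fun _ => (1 : K)}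

end Ultragraph

namespace Ultragraph

variable {V E : Type} (K : Type) [Field K] (U : Ultragraph V E)

/-- The `K`-vector space `V_A` (`A = r(x)`), with basis `{z ∈ 𝔭 : r(z) = A}`. -/
abbrev ModVx (A : Set V) : Type :=
  {z : List E × Set V // U.IsUPath z ∧ z.2 = A} →₀ K

/-- The prescribed `L_K(𝒢)`-action on the basis of `V_A`, together with compatibility of
the `K`- and `L_K(𝒢)`-scalar multiplications. -/
def VxHyps (A : Set V) [instM : Module (LPA K U) (ModVx K U A)] : Prop :=
  (∀ (k : K) (a : LPA K U) (m : ModVx K U A), (k • a) • m = k • (a • m)) ∧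
  (∀ (B : Set V) (hB : U.IsG0 B) (z : {z : List E × Set V // U.IsUPath z ∧ z.2 = A}),
      ((B ∩ U.srcSet z.1).Nonempty →
        pGen K U B hB • Finsupp.single z (1 : K) = Finsupp.single z (1 : K)) ∧
      (¬ (B ∩ U.srcSet z.1).Nonempty →
        pGen K U B hB • Finsupp.single z (1 : K) = 0)) ∧
  (∀ (e : E) (z : {z : List E × Set V // U.IsUPath z ∧ z.2 = A}),
      ((U.r e ∩ U.srcSet z.1).Nonempty →
        ∀ z' : {z : List E × Set V // U.IsUPath z ∧ z.2 = A}, z'.1 = (e :: z.1.1, z.1.2) →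
          sGen K U e • Finsupp.single z (1 : K) = Finsupp.single z' (1 : K)) ∧
      (¬ (U.r e ∩ U.srcSet z.1).Nonempty →
        sGen K U e • Finsupp.single z (1 : K) = 0)) ∧
  (∀ (e : E) (z : {z : List E × Set V // U.IsUPath z ∧ z.2 = A}),
      (∀ l : List E, z.1.1 = e :: l →
        ∀ z' : {z : List E × Set V // U.IsUPath z ∧ z.2 = A}, z'.1 = (l, z.1.2) →
          stGen K U e • Finsupp.single z (1 : K) = Finsupp.single z' (1 : K)) ∧
      ((∀ l : List E, z.1.1 ≠ e :: l) →
        stGen K U e • Finsupp.single z (1 : K) = 0))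

/-- The `K`-vector space `V_{[p]}`, with basis the tail-equivalence class `[p]`. -/
abbrev ModVp (p : ℕ → E) : Type :=
  {q : ℕ → E // U.IsIPath q ∧ IPEquiv p q} →₀ K

/-- The prescribed `L_K(𝒢)`-action on the basis of `V_{[p]}`, together with compatibility
of the `K`- and `L_K(𝒢)`-scalar multiplications. -/
def VpHyps (p : ℕ → E) [instM : Module (LPA K U) (ModVp K U p)] : Prop :=
  (∀ (k : K) (a : LPA K U) (m : ModVp K U p), (k • a) • m = k • (a • m)) ∧
  (∀ (B : Set V) (hB : U.IsG0 B) (q : {q : ℕ → E // U.IsIPath q ∧ IPEquiv p q}),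
      (U.s (q.1 0) ∈ B →
        pGen K U B hB • Finsupp.single q (1 : K) = Finsupp.single q (1 : K)) ∧
      (U.s (q.1 0) ∉ B →
        pGen K U B hB • Finsupp.single q (1 : K) = 0)) ∧
  (∀ (e : E) (q : {q : ℕ → E // U.IsIPath q ∧ IPEquiv p q}),
      (U.s (q.1 0) ∈ U.r e →
        ∀ q' : {q : ℕ → E // U.IsIPath q ∧ IPEquiv p q}, q'.1 = prependL [e] q.1 →
          sGen K U e • Finsupp.single q (1 : K) = Finsupp.single q' (1 : K)) ∧
      (U.s (q.1 0) ∉ U.r e →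
        sGen K U e • Finsupp.single q (1 : K) = 0)) ∧
  (∀ (e : E) (q : {q : ℕ → E // U.IsIPath q ∧ IPEquiv p q}),
      (q.1 0 = e →
        ∀ q' : {q : ℕ → E // U.IsIPath q ∧ IPEquiv p q}, q'.1 = shiftL 1 q.1 →
          stGen K U e • Finsupp.single q (1 : K) = Finsupp.single q' (1 : K)) ∧
      (q.1 0 ≠ e →
        stGen K U e • Finsupp.single q (1 : K) = 0))

/-- A rational infinite path: tail-equivalent to `c^∞` for some cycle `c`. -/
def IsRationalP (p : ℕ → E) : Prop :=
  ∃ (c : List E) (hc : c ≠ []), U.IsCycle c ∧ IPEquiv p (periodicL c hc)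

/-- The Laurent polynomial ring `K[t,t⁻¹]`. -/
abbrev LaurK : Type := LaurentPolynomial K

/-- The quotient `K[t,t⁻¹]/(f)`. -/
abbrev QuotF (f : LaurK K) : Type := LaurK K ⧸ Ideal.span ({f} : Set (LaurK K))

/-- The prescribed right `K[t,t⁻¹]`-structure on `V_{[p]}` induced by the isotropy
action: for `p ∼ c^∞` with `c` a cycle, `t` acts by shifting by `|c|` (prepending `c`);
together with compatibility with the `K`-structure. -/
def VpLaurHyps (p : ℕ → E) [instF : Module (LaurK K) (ModVp K U p)] : Prop :=
  (∀ (k : K) (m : ModVp K U p), (algebraMap K (LaurK K) k) • m = k • m) ∧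
  (∀ (c : List E) (hc : c ≠ []), U.IsCycle c → IPEquiv p (periodicL c hc) →
    ∀ (q q' : {q : ℕ → E // U.IsIPath q ∧ IPEquiv p q}), q.1 = prependL c q'.1 →
      (LaurentPolynomial.T 1 : LaurK K) • Finsupp.single q' (1 : K) =
        Finsupp.single q (1 : K))

/-- The module `V^f_{[p]} = V_{[p]} ⊗_{K[t,t⁻¹]} K[t,t⁻¹]/(f)`. -/
abbrev ModVf (p : ℕ → E) (f : LaurK K) [instF : Module (LaurK K) (ModVp K U p)] : Type :=
  TensorProduct (LaurK K) (ModVp K U p) (QuotF K f)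

/-- The prescribed `L_K(𝒢)`-action on `V^f_{[p]}`: the action on simple tensors is the
`V_{[p]}`-action on the first factor, and it commutes with the `K[t,t⁻¹]`-action. -/
def VfHyps (p : ℕ → E) (f : LaurK K) [instF : Module (LaurK K) (ModVp K U p)]
    [instL : Module (LPA K U) (ModVf K U p f)] : Prop :=
  (∀ (u : LaurK K) (a : LPA K U) (m : ModVf K U p f), a • u • m = u • a • m) ∧
  (∀ (B : Set V) (hB : U.IsG0 B) (q : {q : ℕ → E // U.IsIPath q ∧ IPEquiv p q})
      (w : QuotF K f),
      (U.s (q.1 0) ∈ B →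
        pGen K U B hB • (Finsupp.single q (1 : K) ⊗ₜ[LaurK K] w) =
          Finsupp.single q (1 : K) ⊗ₜ[LaurK K] w) ∧
      (U.s (q.1 0) ∉ B →
        pGen K U B hB • (Finsupp.single q (1 : K) ⊗ₜ[LaurK K] w) = 0)) ∧
  (∀ (e : E) (q : {q : ℕ → E // U.IsIPath q ∧ IPEquiv p q}) (w : QuotF K f),
      (U.s (q.1 0) ∈ U.r e →
        ∀ q' : {q : ℕ → E // U.IsIPath q ∧ IPEquiv p q}, q'.1 = prependL [e] q.1 →
          sGen K U e • (Finsupp.single q (1 : K) ⊗ₜ[LaurK K] w) =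
            Finsupp.single q' (1 : K) ⊗ₜ[LaurK K] w) ∧
      (U.s (q.1 0) ∉ U.r e →
        sGen K U e • (Finsupp.single q (1 : K) ⊗ₜ[LaurK K] w) = 0)) ∧
  (∀ (e : E) (q : {q : ℕ → E // U.IsIPath q ∧ IPEquiv p q}) (w : QuotF K f),
      (q.1 0 = e →
        ∀ q' : {q : ℕ → E // U.IsIPath q ∧ IPEquiv p q}, q'.1 = shiftL 1 q.1 →
          stGen K U e • (Finsupp.single q (1 : K) ⊗ₜ[LaurK K] w) =
            Finsupp.single q' (1 : K) ⊗ₜ[LaurK K] w) ∧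
      (q.1 0 ≠ e →
        stGen K U e • (Finsupp.single q (1 : K) ⊗ₜ[LaurK K] w) = 0))

end Ultragraph

namespace Ultragraph

variable {V E : Type} (U : Ultragraph V E)

/-- `μ` is eventually periodic: `μ = p·σσσ⋯` for a finite list `p` and a cycle `σ`. -/
def IsEvPeriodic (μ : XType V E) : Prop :=
  ∃ (l c : List E) (hc : c ≠ []), U.IsCycle c ∧ μ = Sum.inr (prependL l (periodicL c hc))

end Ultragraph


/- An `L_K(𝒢)`-linear map between the modules `V_{[p]}` is pinned down by the projections
`s_α s*_α`, which cut a vector down to the basis paths with prefix `α`: a basis vector is fixed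
by all of them, so its image is supported on paths with every prefix of it, i.e. on the same
path. The same projections isolate a basis vector inside any nonzero submodule, and
`s_β s*_α` moves the basis vector `αμ` to `βμ`, so `[p]` is a single orbit. Hence `V_{[p]}` is
simple, an endomorphism is a scalar, and an isomorphism `V_{[p]} ≅ V_{[q]}` must send `p`
into `[q]`. -/

namespace IPEquiv

variable {E : Type} {f g h : ℕ → E}

theorem refl (f : ℕ → E) : IPEquiv f f := ⟨0, 0, rfl⟩

theorem symm : IPEquiv f g → IPEquiv g f := fun ⟨m, n, hmn⟩ => ⟨n, m, hmn.symm⟩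

theorem trans : IPEquiv f g → IPEquiv g h → IPEquiv f h := by
  rintro ⟨a, b, hab⟩ ⟨c, d, hcd⟩
  refine ⟨c + a, b + d, funext fun n => ?_⟩
  have h₁ := congrFun hab (n + c)
  have h₂ := congrFun hcd (n + b)
  simp only [shiftL] at h₁ h₂ ⊢
  rw [← add_assoc, h₁, Nat.add_right_comm, h₂, add_assoc]

theorem shiftL_right (f : ℕ → E) (n : ℕ) : IPEquiv f (shiftL n f) := ⟨n, 0, rfl⟩

theorem prependL_singleton_right (e : E) (f : ℕ → E) : IPEquiv f (prependL [e] f) :=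
  ⟨0, 1, funext fun n => by simp [shiftL, prependL]⟩

end IPEquiv

namespace Ultragraph

variable {V E : Type} {U : Ultragraph V E}

theorem IsIPath.shiftL {f : ℕ → E} (hf : U.IsIPath f) (n : ℕ) :
    U.IsIPath (shiftL n f) := fun i => by
  show U.s (f (i + 1 + n)) ∈ U.r (f (i + n))
  rw [Nat.add_right_comm]
  exact hf (i + n)

theorem IsIPath.prependL_singleton {f : ℕ → E} {e : E} (hf : U.IsIPath f)
    (he : U.s (f 0) ∈ U.r e) : U.IsIPath (prependL [e] f)
  | 0 => by simpa [prependL] using he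
  | n + 1 => by simpa [prependL] using hf n

theorem ipEquiv_iff_setOf_eq {p q : ℕ → E} (hq : U.IsIPath q) :
    IPEquiv p q ↔
      {h : ℕ → E | U.IsIPath h ∧ IPEquiv p h} =
        {h : ℕ → E | U.IsIPath h ∧ IPEquiv q h} := by
  refine ⟨fun hpq => ?_, fun hset => ?_⟩
  · ext h
    exact and_congr_right' ⟨hpq.symm.trans, hpq.trans⟩
  · have hq' : q ∈ {h : ℕ → E | U.IsIPath h ∧ IPEquiv q h} := ⟨hq, .refl q⟩
    rw [← hset] at hq'
    exact hq'.2

abbrev TailClass (U : Ultragraph V E) (p : ℕ → E) : Type :=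
  {q : ℕ → E // U.IsIPath q ∧ IPEquiv p q}

namespace TailClass

variable {p q : ℕ → E}

def shift (n : ℕ) (z : U.TailClass p) : U.TailClass p :=
  ⟨shiftL n z.1, z.2.1.shiftL n, z.2.2.trans (.shiftL_right _ n)⟩

def cons (e : E) (z : U.TailClass p) (h : U.s (z.1 0) ∈ U.r e) : U.TailClass p :=
  ⟨prependL [e] z.1, z.2.1.prependL_singleton h, z.2.2.trans (.prependL_singleton_right e _)⟩

theorem shift_zero (z : U.TailClass p) : z.shift 0 = z := rfl

theorem shift_succ (n : ℕ) (z : U.TailClass p) : z.shift (n + 1) = (z.shift 1).shift n := rfl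

theorem length_take (n : ℕ) (z : U.TailClass p) : (Stream'.take n z.1).length = n :=
  Stream'.length_take n z.1

theorem take_zero (z : U.TailClass p) : Stream'.take 0 z.1 = [] := rfl

theorem take_succ (n : ℕ) (z : U.TailClass p) :
    Stream'.take (n + 1) z.1 = z.1 0 :: Stream'.take n (z.shift 1).1 := rfl

theorem cons_shift_one (z : U.TailClass p) {e : E} (he : z.1 0 = e)
    (h : U.s ((z.shift 1).1 0) ∈ U.r e) : (z.shift 1).cons e h = z := by
  refine Subtype.ext (funext fun n => ?_)
  cases n <;> simp [cons, shift, prependL, shiftL, he]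

def congr (hpq : IPEquiv p q) : U.TailClass p ≃ U.TailClass q :=
  Equiv.subtypeEquivRight fun _ => and_congr_right' ⟨hpq.symm.trans, hpq.trans⟩

theorem congr_coe (hpq : IPEquiv p q) (z : U.TailClass p) : (congr hpq z).1 = z.1 := rfl

theorem congr_cons (hpq : IPEquiv p q) (e : E) (z : U.TailClass p)
    (h : U.s (z.1 0) ∈ U.r e) : congr hpq (z.cons e h) = (congr hpq z).cons e h := rfl

theorem congr_shift (hpq : IPEquiv p q) (n : ℕ) (z : U.TailClass p) :
    congr hpq (z.shift n) = (congr hpq z).shift n := rfl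

end TailClass

variable {K : Type} [Field K]

theorem stPath_cons (e : E) (l : List E) : stPath K U (e :: l) = stPath K U l * stGen K U e := by
  simp [stPath]

theorem sPath_cons (e : E) (l : List E) : sPath K U (e :: l) = sGen K U e * sPath K U l := by
  simp [sPath]

theorem map_smul_of_map_gen_smul {M N : Type} [AddCommMonoid M] [Module K M]
    [Module (LPA K U) M] [IsScalarTower K (LPA K U) M] [AddCommMonoid N] [Module K N]
    [Module (LPA K U) N] [IsScalarTower K (LPA K U) N] (g : M →ₗ[K] N)
    (hp : ∀ A hA m, g (pGen K U A hA • m) = pGen K U A hA • g m)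
    (hs : ∀ e m, g (sGen K U e • m) = sGen K U e • g m)
    (hst : ∀ e m, g (stGen K U e • m) = stGen K U e • g m) (a : LPA K U) (m : M) :
    g (a • m) = a • g m := by
  obtain ⟨x, rfl⟩ := RingQuot.mkAlgHom_surjective K (LRel K U) a
  induction x using FreeAlgebra.induction generalizing m with
  | grade0 r => rw [AlgHom.commutes, algebraMap_smul, algebraMap_smul, map_smul]
  | grade1 x =>
    cases x with
    | pr A => exact hp A.1 A.2 m
    | ed e => exact hs e m
    | st e => exact hst e m
  | mul x y hx hy => rw [map_mul, mul_smul, mul_smul, hx, hy]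
  | add x y hx hy => rw [map_add, add_smul, add_smul, map_add, hx, hy]

variable {p q : ℕ → E} [Module (LPA K U) (ModVp K U p)] [Module (LPA K U) (ModVp K U q)]

theorem VpHyps.isScalarTower (hVp : VpHyps K U p) : IsScalarTower K (LPA K U) (ModVp K U p) :=
  ⟨hVp.1⟩

theorem pGen_smul_single (hVp : VpHyps K U p) (B : Set V) (hB : U.IsG0 B) (z : U.TailClass p)
    (k : K) :
    pGen K U B hB • (Finsupp.single z k : ModVp K U p) =
      if U.s (z.1 0) ∈ B then Finsupp.single z k else 0 := by
  have := hVp.isScalarTower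
  rw [← Finsupp.smul_single_one, smul_comm]
  split_ifs with h
  · rw [(hVp.2.1 B hB z).1 h]
  · rw [(hVp.2.1 B hB z).2 h, smul_zero]

theorem sGen_smul_single (hVp : VpHyps K U p) (e : E) (z : U.TailClass p) (k : K) :
    sGen K U e • (Finsupp.single z k : ModVp K U p) =
      if h : U.s (z.1 0) ∈ U.r e then Finsupp.single (z.cons e h) k else 0 := by
  have := hVp.isScalarTower
  rw [← Finsupp.smul_single_one, smul_comm]
  split_ifs with h
  · rw [(hVp.2.2.1 e z).1 h (z.cons e h) rfl, Finsupp.smul_single_one]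
  · rw [(hVp.2.2.1 e z).2 h, smul_zero]

theorem stGen_smul_single (hVp : VpHyps K U p) (e : E) (z : U.TailClass p) (k : K) :
    stGen K U e • (Finsupp.single z k : ModVp K U p) =
      if z.1 0 = e then Finsupp.single (z.shift 1) k else 0 := by
  have := hVp.isScalarTower
  rw [← Finsupp.smul_single_one, smul_comm]
  split_ifs with h
  · rw [(hVp.2.2.2 e z).1 h (z.shift 1) rfl, Finsupp.smul_single_one]
  · rw [(hVp.2.2.2 e z).2 h, smul_zero]

theorem stPath_smul_single (hVp : VpHyps K U p) (l : List E) (z : U.TailClass p) (k : K) :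
    stPath K U l • (Finsupp.single z k : ModVp K U p) =
      if Stream'.take l.length z.1 = l then Finsupp.single (z.shift l.length) k else 0 := by
  induction l generalizing z with
  | nil => simp [stPath, TailClass.take_zero, TailClass.shift_zero]
  | cons e l ih =>
    rw [stPath_cons, mul_smul, stGen_smul_single hVp, List.length_cons, TailClass.take_succ,
      TailClass.shift_succ l.length]
    by_cases he : z.1 0 = e
    · simp only [he, if_true, ih, List.cons.injEq, true_and]
    · simp only [he, if_false, smul_zero, List.cons.injEq, false_and]

theorem sPath_smul_single_shift (hVp : VpHyps K U p) {l : List E} {z : U.TailClass p}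
    (h : Stream'.take l.length z.1 = l) (k : K) :
    sPath K U l • (Finsupp.single (z.shift l.length) k : ModVp K U p) = Finsupp.single z k := by
  induction l generalizing z with
  | nil => simp [sPath, TailClass.shift_zero]
  | cons e l ih =>
    rw [List.length_cons, TailClass.take_succ, List.cons.injEq] at h
    have hmem : U.s ((z.shift 1).1 0) ∈ U.r e := h.1 ▸ z.2.1 0
    rw [sPath_cons, mul_smul, List.length_cons, TailClass.shift_succ l.length, ih h.2,
      sGen_smul_single hVp, dif_pos hmem, TailClass.cons_shift_one z h.1]

theorem sPath_mul_stPath_smul (hVp : VpHyps K U p) (l : List E) (m : ModVp K U p) :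
    (sPath K U l * stPath K U l) • m = m.filter fun w => Stream'.take l.length w.1 = l := by
  induction m using Finsupp.induction_linear with
  | zero => rw [smul_zero, Finsupp.filter_zero]
  | add m m' hm hm' => rw [smul_add, hm, hm', Finsupp.filter_add]
  | single z k =>
    rw [mul_smul, stPath_smul_single hVp]
    set prefixed : U.TailClass p → Prop := fun w => Stream'.take l.length w.1 = l
    split_ifs with h
    · rw [sPath_smul_single_shift hVp h, Finsupp.filter_single_of_pos (p := prefixed) h]
    · rw [smul_zero, Finsupp.filter_single_of_neg (p := prefixed) h]

theorem eq_of_map_single_apply_ne_zero (hVp : VpHyps K U p) (hVq : VpHyps K U q)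
    (f : ModVp K U p →ₗ[LPA K U] ModVp K U q) {z : U.TailClass p} {w : U.TailClass q}
    (hw : f (Finsupp.single z 1) w ≠ 0) : w.1 = z.1 := by
  refine Stream'.take_theorem _ _ fun n => ?_
  have hfix : (sPath K U (Stream'.take n z.1) * stPath K U (Stream'.take n z.1)) •
      (Finsupp.single z 1 : ModVp K U p) = Finsupp.single z 1 := by
    rw [sPath_mul_stPath_smul hVp, Finsupp.filter_single_of_pos]
    rw [TailClass.length_take]
  rw [← hfix, map_smul, sPath_mul_stPath_smul hVq, Finsupp.filter_apply] at hw
  simpa only [TailClass.length_take] using (ite_ne_right_iff.mp hw).1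

theorem exists_smul_single_eq_single (hVp : VpHyps K U p) (z w : U.TailClass p) :
    ∃ a : LPA K U, a • (Finsupp.single z 1 : ModVp K U p) = Finsupp.single w 1 := by
  obtain ⟨m, n, hmn⟩ := z.2.2.symm.trans w.2.2
  refine ⟨sPath K U (Stream'.take n w.1) * stPath K U (Stream'.take m z.1), ?_⟩
  have hw := sPath_smul_single_shift hVp (l := Stream'.take n w.1) (z := w)
    (by rw [TailClass.length_take]) (1 : K)
  rw [TailClass.length_take] at hw
  rw [mul_smul, stPath_smul_single hVp, TailClass.length_take, if_pos rfl,
    show z.shift m = w.shift n from Subtype.ext hmn, hw]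

theorem exists_single_mem_of_ne_zero (hVp : VpHyps K U p)
    {W : Submodule (LPA K U) (ModVp K U p)} {m : ModVp K U p} (hm : m ∈ W) (hm0 : m ≠ 0) :
    ∃ w, Finsupp.single w (1 : K) ∈ W := by
  have := hVp.isScalarTower
  induction hcard : m.support.card using Nat.strong_induction_on generalizing m with
  | _ N ih =>
  obtain ⟨w, hw⟩ := Finsupp.support_nonempty_iff.mpr hm0
  by_cases honly : ∀ w' ∈ m.support, w' = w
  · obtain ⟨hmw, hm_eq⟩ := Finsupp.support_eq_singleton.mp
      (Finset.eq_singleton_iff_unique_mem.mpr ⟨hw, honly⟩)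
    refine ⟨w, ?_⟩
    have hscale : Finsupp.single w (1 : K) = (m w)⁻¹ • m := by
      rw [hm_eq, Finsupp.smul_single, Finsupp.single_eq_same, smul_eq_mul, inv_mul_cancel₀ hmw]
    rw [hscale]
    exact W.smul_of_tower_mem _ hm
  obtain ⟨w', hw', hne⟩ := not_forall₂.mp honly
  -- Project onto the paths sharing with `w` a prefix that `w'` does not have.
  obtain ⟨n, hn⟩ : ∃ n, Stream'.take n w'.1 ≠ Stream'.take n w.1 := by
    by_contra! h
    exact hne (Subtype.ext (Stream'.take_theorem _ _ h))
  set l := Stream'.take n w.1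
  have hmem : m.filter (fun x => Stream'.take l.length x.1 = l) ∈ W :=
    sPath_mul_stPath_smul hVp l m ▸ W.smul_mem _ hm
  refine ih _ ?_ hmem ?_ rfl
  · rw [← hcard, Finsupp.support_filter]
    exact Finset.card_lt_card (Finset.filter_ssubset.mpr
      ⟨w', hw', by rwa [TailClass.length_take]⟩)
  · refine Finsupp.ne_iff.mpr ⟨w, ?_⟩
    rw [Finsupp.filter_apply, TailClass.length_take, if_pos rfl]
    exact Finsupp.mem_support_iff.mp hw

theorem eq_top_of_single_mem (hVp : VpHyps K U p) {W : Submodule (LPA K U) (ModVp K U p)}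
    {z : U.TailClass p} (hz : Finsupp.single z (1 : K) ∈ W) : W = ⊤ := by
  have := hVp.isScalarTower
  rw [eq_top_iff]
  rintro m -
  induction m using Finsupp.induction_linear with
  | zero => exact W.zero_mem
  | add m m' hm hm' => exact W.add_mem hm hm'
  | single w k =>
    obtain ⟨a, ha⟩ := exists_smul_single_eq_single hVp z w
    rw [← Finsupp.smul_single_one, ← ha]
    exact W.smul_of_tower_mem k (W.smul_mem a hz)

theorem isSimpleModule_modVp (hp : U.IsIPath p) (hVp : VpHyps K U p) :
    IsSimpleModule (LPA K U) (ModVp K U p) := by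
  have : Nonempty (U.TailClass p) := ⟨⟨p, hp, .refl p⟩⟩
  refine isSimpleModule_iff_toSpanSingleton_surjective.mpr ⟨inferInstance, fun m hm => ?_⟩
  obtain ⟨w, hw⟩ := exists_single_mem_of_ne_zero hVp (Submodule.mem_span_singleton_self m) hm
  rw [← LinearMap.range_eq_top, ← LinearMap.span_singleton_eq_range]
  exact eq_top_of_single_mem hVp hw

theorem exists_unique_eq_smul_of_endomorphism (hp : U.IsIPath p) (hVp : VpHyps K U p)
    (f : ModVp K U p →ₗ[LPA K U] ModVp K U p) : ∃! c : K, ∀ m, f m = c • m := by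
  have := hVp.isScalarTower
  set z₀ : U.TailClass p := ⟨p, hp, .refl p⟩
  set c := f (Finsupp.single z₀ 1) z₀
  have hz₀ : f (Finsupp.single z₀ 1) = c • Finsupp.single z₀ 1 := by
    ext w
    by_cases hw : w = z₀
    · simp [hw, c]
    · rw [Finsupp.smul_single_one, Finsupp.single_eq_of_ne' (Ne.symm hw)]
      by_contra hne
      exact hw (Subtype.ext (eq_of_map_single_apply_ne_zero hVp hVp f hne))
  have hsingle : ∀ w, f (Finsupp.single w 1) = c • Finsupp.single w 1 := by
    intro w
    obtain ⟨a, ha⟩ := exists_smul_single_eq_single hVp z₀ w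
    rw [← ha, map_smul, hz₀, smul_comm]
  refine ⟨c, fun m => ?_, fun c' hc' => ?_⟩
  · induction m using Finsupp.induction_linear with
    | zero => rw [map_zero, smul_zero]
    | add m m' hm hm' => rw [map_add, hm, hm', smul_add]
    | single w k => rw [← Finsupp.smul_single_one, f.map_smul_of_tower, hsingle, smul_comm]
  · exact smul_left_injective K (Finsupp.single_ne_zero.mpr one_ne_zero)
      ((hc' _).symm.trans hz₀)

theorem ipEquiv_of_linearEquiv (hp : U.IsIPath p) (hVp : VpHyps K U p) (hVq : VpHyps K U q)
    (φ : ModVp K U p ≃ₗ[LPA K U] ModVp K U q) : IPEquiv p q := by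
  set z₀ : U.TailClass p := ⟨p, hp, .refl p⟩
  have hne : φ (Finsupp.single z₀ 1) ≠ 0 :=
    φ.map_ne_zero_iff.mpr (Finsupp.single_ne_zero.mpr one_ne_zero)
  obtain ⟨w, hw⟩ := Finsupp.support_nonempty_iff.mpr hne
  have hwp : w.1 = p :=
    eq_of_map_single_apply_ne_zero hVp hVq φ.toLinearMap (Finsupp.mem_support_iff.mp hw)
  exact (hwp ▸ w.2.2).symm

theorem domLCongr_tailClassCongr_map_smul (hVp : VpHyps K U p) (hVq : VpHyps K U q)
    (hpq : IPEquiv p q) (a : LPA K U) (m : ModVp K U p) :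
    Finsupp.domLCongr (R := K) (TailClass.congr hpq) (a • m) =
      a • Finsupp.domLCongr (R := K) (TailClass.congr hpq) m := by
  have := hVp.isScalarTower
  have := hVq.isScalarTower
  set g : ModVp K U p →ₗ[K] ModVp K U q :=
    (Finsupp.domLCongr (M := K) (R := K) (TailClass.congr hpq)).toLinearMap
  have hg : ∀ z k, g (Finsupp.single z k) = Finsupp.single (TailClass.congr hpq z) k :=
    Finsupp.domLCongr_single (TailClass.congr hpq)
  have of_single : ∀ b : LPA K U,
      (∀ z k, g (b • Finsupp.single z k) = b • g (Finsupp.single z k)) →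
        ∀ m, g (b • m) = b • g m := by
    intro b hb m
    induction m using Finsupp.induction_linear with
    | zero => rw [smul_zero, map_zero, smul_zero]
    | add m m' hm hm' => rw [smul_add, map_add, hm, hm', map_add, smul_add]
    | single z k => exact hb z k
  refine map_smul_of_map_gen_smul g (fun B hB => of_single _ fun z k => ?_)
    (fun e => of_single _ fun z k => ?_) (fun e => of_single _ fun z k => ?_) a m
  · by_cases h : U.s (z.1 0) ∈ B <;>
      simp [hg, h, TailClass.congr_coe, pGen_smul_single hVp, pGen_smul_single hVq]
  · by_cases h : U.s (z.1 0) ∈ U.r e <;>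
      simp [hg, h, TailClass.congr_coe, TailClass.congr_cons, sGen_smul_single hVp,
        sGen_smul_single hVq]
  · by_cases h : z.1 0 = e <;>
      simp [hg, h, TailClass.congr_coe, TailClass.congr_shift, stGen_smul_single hVp,
        stGen_smul_single hVq]

noncomputable def modVpCongr (hVp : VpHyps K U p) (hVq : VpHyps K U q) (hpq : IPEquiv p q) :
    ModVp K U p ≃ₗ[LPA K U] ModVp K U q :=
  { Finsupp.domLCongr (R := K) (TailClass.congr hpq) with
    map_smul' := domLCongr_tailClassCongr_map_smul hVp hVq hpq }

end Ultragraph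

open Ultragraph in
theorem ultragraph_leavitt_Vp_simple_general
    (K : Type) [Field K] (V E : Type)
    (U : Ultragraph V E)
    (p q : ℕ → E) (hp : U.IsIPath p) (hq : U.IsIPath q)
    [instp : Module (LPA K U) (ModVp K U p)]
    [instq : Module (LPA K U) (ModVp K U q)]
    (hVp : VpHyps K U p) (hVq : VpHyps K U q) :
    IsSimpleModule (LPA K U) (ModVp K U p) ∧
    (Nonempty (ModVp K U p ≃ₗ[LPA K U] ModVp K U q) ↔ IPEquiv p q) ∧
    (IPEquiv p q ↔
      {h : ℕ → E | U.IsIPath h ∧ IPEquiv p h} =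
        {h : ℕ → E | U.IsIPath h ∧ IPEquiv q h}) ∧
    (∀ f : ModVp K U p →ₗ[LPA K U] ModVp K U p,
      ∃! k : K, ∀ m : ModVp K U p, f m = k • m) :=
  ⟨isSimpleModule_modVp hp hVp,
    ⟨fun ⟨φ⟩ => ipEquiv_of_linearEquiv hp hVp hVq φ,
      fun hpq => ⟨modVpCongr hVp hVq hpq⟩⟩,
    ipEquiv_iff_setOf_eq hq, exists_unique_eq_smul_of_endomorphism hp hVp⟩

open Ultragraph in
/-- For irrational infinite paths `p, q`, the module `V_{[p]}` (with
basis `[p]` and the prescribed action) is simple, `V_{[p]} ≅ V_{[q]}` iff `[p] = [q]`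
(equivalently the two bases coincide), and `End(V_{[p]}) ≅ K`. -/
theorem ultragraph_leavitt_Vp_simple
    (K : Type) [Field K] (V E : Type) [Countable V] [Countable E]
    (U : Ultragraph V E) (hns : U.HasNoSinks)
    (p q : ℕ → E) (hp : U.IsIPath p) (hq : U.IsIPath q)
    (hpirr : ¬ U.IsRationalP p) (hqirr : ¬ U.IsRationalP q)
    [instp : Module (LPA K U) (ModVp K U p)]
    [instq : Module (LPA K U) (ModVp K U q)]
    (hVp : VpHyps K U p) (hVq : VpHyps K U q) :
    IsSimpleModule (LPA K U) (ModVp K U p) ∧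
    (Nonempty (ModVp K U p ≃ₗ[LPA K U] ModVp K U q) ↔ IPEquiv p q) ∧
    (IPEquiv p q ↔
      {h : ℕ → E | U.IsIPath h ∧ IPEquiv p h} =
        {h : ℕ → E | U.IsIPath h ∧ IPEquiv q h}) ∧
    (∀ f : ModVp K U p →ₗ[LPA K U] ModVp K U p,
      ∃! k : K, ∀ m : ModVp K U p, f m = k • m) :=
  ultragraph_leavitt_Vp_simple_general K V E U p q hp hq (instp := instp) (instq := instq) hVp hVq
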